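/- arXiv:1711.02910 — 2 statements merged into one kernel-verified Lean document; each statement's English description precedes it below -/
import Mathlib

section
/- For all natural numbers n, r, σ with 2 ≤ σ and 2 ≤ r ≤ n, the number T of strings of length n over the alphabet {0,…,σ−1} having exactly r runs satisfies log₂ T ≥ r·log₂(n(σ−1)/r) − log₂(n/r) − 2, where the inequality is over the real numbers. -/
/-!
Over the group `Fin σ`, a string `s` of length `n` is determined by its first letter and its
difference sequence `(-s i + s (i + 1))ᵢ`, and the breaks between runs of `s` are exactly the
nonzero differences. Hence `T = σ · C(n-1, r-1) · (σ-1)^(r-1)`. Pairing the factors of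
`C(n-1, r-1) = ∏ (n-1-i)/(r-1-i)` gives `C(n-1, r-1) ≥ (n/r)^(r-1)`, so
`T ≥ (n(σ-1)/r)^(r-1) (σ-1)`, whose logarithm is `r log(n(σ-1)/r) - log(n/r)`.
-/

open Finset

theorem Nat.succ_pow_le_succ_pow_mul_choose {m k : ℕ} (hkm : k ≤ m) :
    (m + 1) ^ k ≤ (k + 1) ^ k * m.choose k := by
  have hdesc : (m + 1) ^ k * k.descFactorial k ≤ (k + 1) ^ k * m.descFactorial k := by
    simp only [descFactorial_eq_prod_range, pow_eq_prod_const, ← prod_mul_distrib]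
    refine prod_le_prod' fun i hi => ?_
    -- `(k + 1) (m - i) - (m + 1) (k - i) = (i + 1) (m - k)`
    have hik : i < k := mem_range.mp hi
    zify [hik.le, hik.le.trans hkm]
    nlinarith
  rw [descFactorial_self, descFactorial_eq_factorial_mul_choose, mul_left_comm, mul_comm]
    at hdesc
  exact Nat.le_of_mul_le_mul_left hdesc (factorial_pos k)

theorem Nat.succ_div_succ_pow_le_choose {α : Type*} [Field α] [LinearOrder α]
    [IsStrictOrderedRing α] {m k : ℕ} (hkm : k ≤ m) :
    (((m : α) + 1) / (k + 1)) ^ k ≤ m.choose k := by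
  rw [div_pow, div_le_iff₀ (by positivity), mul_comm]
  exact_mod_cast Nat.succ_pow_le_succ_pow_mul_choose hkm

section
variable {ι M : Type*} [Fintype ι] [DecidableEq ι] [Fintype M] [Zero M] [DecidableEq M]

theorem card_filter_filter_ne_zero_eq (S : Finset ι) :
    #{f : ι → M | ({i | f i ≠ 0} : Finset ι) = S} = (Fintype.card M - 1) ^ #S := by
  have : ({f : ι → M | ({i | f i ≠ 0} : Finset ι) = S} : Finset _) =
      Fintype.piFinset fun i => if i ∈ S then ({x | x ≠ 0} : Finset M) else {0} := by
    ext f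
    simp only [mem_filter, mem_univ, true_and, Fintype.mem_piFinset, Finset.ext_iff]
    refine forall_congr' fun i => ?_
    split_ifs with hi <;> simp [hi]
  simp only [this, Fintype.card_piFinset, apply_ite card, card_singleton]
  rw [prod_ite_mem, univ_inter, prod_const,
    filter_ne', card_erase_of_mem (mem_univ _), card_univ]

theorem card_filter_hammingNorm_eq (k : ℕ) :
    #{f : ι → M | hammingNorm f = k} =
      (Fintype.card ι).choose k * (Fintype.card M - 1) ^ k := by
  rw [card_eq_sum_card_fiberwise (f := fun f => ({i | f i ≠ 0} : Finset ι))
    (t := powersetCard k univ) (fun f hf => by simpa [hammingNorm] using hf)]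
  calc _ = ∑ S ∈ powersetCard k (univ : Finset ι), (Fintype.card M - 1) ^ k := by
        refine sum_congr rfl fun S hS => ?_
        rw [mem_powersetCard] at hS
        rw [filter_filter, ← hS.2, ← card_filter_filter_ne_zero_eq]
        congr 1
        ext f
        simp only [mem_filter, mem_univ, true_and, and_iff_right_iff_imp]
        rintro rfl
        rfl
    _ = _ := by rw [sum_const, card_powersetCard, card_univ, smul_eq_mul]
end

section
variable (G : Type*) [AddGroup G] (m : ℕ)

def Fin.headDiffEquiv : (Fin (m + 1) → G) ≃ G × (Fin m → G) where
  toFun s := (s 0, fun i => -s i.castSucc + s i.succ)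
  invFun p := p.1 +ᵥ Fin.partialSum p.2
  left_inv := Fin.partialSum_left_neg
  right_inv p := by
    ext i
    · simp
    · simp [neg_add_rev, add_assoc, Fin.partialSum_right_neg]

variable {G} [Fintype G] [DecidableEq G]

theorem card_filter_hammingDist_castSucc_succ_eq (k : ℕ) :
    #{s : Fin (m + 1) → G | hammingDist (fun i : Fin m => s i.castSucc) (fun i => s i.succ) = k} =
      Fintype.card G * (m.choose k * (Fintype.card G - 1) ^ k) := by
  have hbreaks (s : Fin (m + 1) → G) :
      hammingDist (fun i : Fin m => s i.castSucc) (fun i => s i.succ) =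
        hammingNorm (Fin.headDiffEquiv G m s).2 := by
    simp [hammingDist, hammingNorm, Fin.headDiffEquiv, neg_add_eq_zero]
  calc _ = #(univ ×ˢ ({d | hammingNorm d = k} : Finset (Fin m → G))) := by
        refine card_nbij' (Fin.headDiffEquiv G m) (Fin.headDiffEquiv G m).symm ?_ ?_ ?_ ?_ <;>
          intro x _ <;>
          simp_all
    _ = _ := by rw [card_product, card_univ, card_filter_hammingNorm_eq, Fintype.card_fin]
end

theorem card_strings_with_breaks {n σ : ℕ} [NeZero σ] (hn : 0 < n) (k : ℕ) :
    Nat.card {s : Fin n → Fin σ //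
        (Finset.univ.filter (fun i : Fin (n - 1) =>
          s ⟨i.val, by omega⟩ ≠ s ⟨i.val + 1, by omega⟩)).card = k} =
      σ * ((n - 1).choose k * (σ - 1) ^ k) := by
  obtain ⟨m, rfl⟩ : ∃ m, n = m + 1 := ⟨n - 1, by omega⟩
  rw [Nat.card_eq_fintype_card, Fintype.card_subtype]
  exact (card_filter_hammingDist_castSucc_succ_eq (G := Fin σ) m k).trans
    (by rw [Fintype.card_fin, Nat.add_sub_cancel])

/-- For `2 ≤ σ` and `2 ≤ r ≤ n`, the number `T` of strings of length `n` over
the alphabet `{0, …, σ-1}` with exactly `r` runs satisfies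
`log₂ T ≥ r·log₂(n(σ-1)/r) − log₂(n/r) − 2` over the reals. -/
theorem logb_card_strings_with_runs (n r σ : ℕ) (hσ : 2 ≤ σ) (hr : 2 ≤ r) (hrn : r ≤ n) :
    Real.logb 2 ((Nat.card {s : Fin n → Fin σ //
        (Finset.univ.filter (fun i : Fin (n - 1) =>
          s ⟨i.val, by omega⟩ ≠ s ⟨i.val + 1, by omega⟩)).card = r - 1} : ℕ) : ℝ) ≥
      (r : ℝ) * Real.logb 2 ((n : ℝ) * ((σ : ℝ) - 1) / (r : ℝ)) -
        Real.logb 2 ((n : ℝ) / (r : ℝ)) - 2 := by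
  have : NeZero σ := ⟨by omega⟩
  rw [card_strings_with_breaks (by omega)]
  obtain ⟨k, rfl⟩ : ∃ k, r = k + 1 := ⟨r - 1, by omega⟩
  obtain ⟨m, rfl⟩ : ∃ m, n = m + 1 := ⟨n - 1, by omega⟩
  simp only [Nat.add_sub_cancel]
  push_cast [Nat.cast_sub (by omega : 1 ≤ σ)]
  have hy : 1 ≤ (σ : ℝ) - 1 := le_sub_iff_add_le.mpr (by norm_num; exact_mod_cast hσ)
  set x : ℝ := ((m : ℝ) + 1) / ((k : ℝ) + 1)
  set y : ℝ := (σ : ℝ) - 1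
  have hT : (x * y) ^ k * y ≤ σ * (m.choose k * y ^ k) := by
    calc (x * y) ^ k * y = x ^ k * y ^ k * y := by rw [mul_pow]
      _ ≤ m.choose k * y ^ k * σ := by
        gcongr
        · exact Nat.succ_div_succ_pow_le_choose (by omega)
        · linarith
      _ = _ := by ring
  have hlog : Real.logb 2 ((x * y) ^ k * y) = (k + 1) * Real.logb 2 (x * y) - Real.logb 2 x := by
    rw [Real.logb_mul (by positivity) (by positivity), Real.logb_pow,
      Real.logb_mul (by positivity) (by positivity)]
    ring
  rw [mul_div_right_comm]
  have hlogT := Real.logb_le_logb_of_le one_lt_two (by positivity) hT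
  linarith
end

section
/- Let m ≥ 1 and c : Fin m → ℕ, and let B be the Boolean list obtained by concatenating, for j = 0, 1, …, m−1 in order, the blocks consisting of c(j) copies of false followed by a single true. Then for every i with 1 ≤ i ≤ ∑_j c(j), the number of occurrences of true that precede the i-th occurrence of false in B equals b − 1, where b is the least index in [1..m] such that ∑_{j < b} c(j) ≥ i; equivalently, the 0-indexed position of the i-th false in B equals (i − 1) + (b − 1). In particular, the i-th false lies inside the b-th block. -/
/-!
The code of the first `k` counts has length `(∑_{j<k} c j) + k`, so block `k` starts there and
its run of `false`s occupies the next `c k` positions. Minimality of `b` says the `i`-th `false`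
lies past the first `b - 1` blocks, and `i ≤ ∑_{j<b} c j` says it lies in block `k = b - 1`.
-/

def unaryCode (L : List ℕ) : List Bool :=
  (L.map fun n => List.replicate n false ++ [true]).flatten

@[simp] theorem unaryCode_cons (n : ℕ) (L : List ℕ) :
    unaryCode (n :: L) = List.replicate n false ++ true :: unaryCode L := by
  simp [unaryCode]

@[simp] theorem unaryCode_append (L L' : List ℕ) :
    unaryCode (L ++ L') = unaryCode L ++ unaryCode L' := by
  simp [unaryCode]

@[simp] theorem length_unaryCode (L : List ℕ) : (unaryCode L).length = L.sum + L.length := by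
  induction L with
  | nil => rfl
  | cons n L ih => simp [ih]; omega

@[simp] theorem count_false_unaryCode (L : List ℕ) : (unaryCode L).count false = L.sum := by
  induction L with
  | nil => rfl
  | cons n L ih => simp [ih]

@[simp] theorem count_true_unaryCode (L : List ℕ) : (unaryCode L).count true = L.length := by
  induction L with
  | nil => rfl
  | cons n L ih => simp [List.count_replicate, ih]

theorem unaryCode_eq_take_append {L : List ℕ} {k : ℕ} (hk : k < L.length) :
    unaryCode L = unaryCode (L.take k) ++
      (List.replicate L[k] false ++ true :: unaryCode (L.drop (k + 1))) := by
  have hsplit := List.take_append_drop k L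
  rw [List.drop_eq_getElem_cons hk] at hsplit
  conv_lhs => rw [← hsplit]
  rw [unaryCode_append, unaryCode_cons]

theorem unaryCode_select_false {L : List ℕ} {k p : ℕ} (hk : k < L.length)
    (hlo : (L.take k).sum + k ≤ p) (hhi : p < (L.take k).sum + k + L[k]) :
    ∃ hp : p < (unaryCode L).length, (unaryCode L)[p] = false ∧
      ((unaryCode L).take p).count false = p - k ∧ ((unaryCode L).take p).count true = k := by
  have hA : (unaryCode (L.take k)).length = (L.take k).sum + k := by simp [hk.le]
  obtain ⟨r, rfl⟩ : ∃ r, p = (unaryCode (L.take k)).length + r :=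
    ⟨p - ((L.take k).sum + k), by omega⟩
  have hr : r < L[k] := by omega
  have hprefix : (unaryCode L).take ((unaryCode (L.take k)).length + r) =
      unaryCode (L.take k) ++ List.replicate r false := by
    rw [unaryCode_eq_take_append hk, List.take_length_add_append,
      List.take_append_of_le_length (by simp; omega), List.take_replicate, Nat.min_eq_left hr.le]
  refine ⟨?_, ?_, ?_, ?_⟩
  · rw [unaryCode_eq_take_append hk, List.length_append]
    simp; omega
  · simp only [unaryCode_eq_take_append hk]
    rw [List.getElem_append_right (by omega)]
    simp [hr]
  · rw [hprefix]; simp; omega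
  · rw [hprefix]; simp [hk.le, List.count_replicate]

theorem sum_take_ofFn {m : ℕ} (c : Fin m → ℕ) {n : ℕ} (h : n ≤ m) :
    ((List.ofFn c).take n).sum = ∑ j : Fin n, c ⟨j, by omega⟩ := by
  rw [← Fin.ofFn_take_eq_take_ofFn h, List.sum_ofFn]; rfl

/-- Let `B` be the concatenation of the unary encodings of `c 0, …, c (m-1)`
(each `c j` encoded as `c j` copies of `false` followed by one `true`). For
`1 ≤ i ≤ ∑ c j`, let `b` be the least index in `[1..m]` with `∑_{j < b} c j ≥ i`.
Then the 0-indexed position of the `i`-th occurrence of `false` in `B` is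
`(i - 1) + (b - 1)`: the letter there is `false`, the prefix before it contains
exactly `i - 1` occurrences of `false` and exactly `b - 1` occurrences of `true`
(so the `i`-th `false` lies in the `b`-th block). -/
theorem unary_select_false (m : ℕ) (c : Fin m → ℕ) (B : List Bool)
    (hB : B = (List.ofFn (fun j : Fin m => List.replicate (c j) false ++ [true])).flatten)
    (i : ℕ) (hi : 1 ≤ i)
    (b : ℕ) (hb : 1 ≤ b) (hbm : b ≤ m)
    (hge : i ≤ ∑ j : Fin b, c ⟨j.val, by omega⟩)
    (hleast : ∀ b' : ℕ, ∀ _hb' : b' < b, (∑ j : Fin b', c ⟨j.val, by omega⟩) < i) :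
    ∃ hp : (i - 1) + (b - 1) < B.length,
      B[(i - 1) + (b - 1)]'hp = false ∧
      (B.take ((i - 1) + (b - 1))).count false = i - 1 ∧
      (B.take ((i - 1) + (b - 1))).count true = b - 1 := by
  have hL : B = unaryCode (List.ofFn c) := by rw [hB, unaryCode, List.map_ofFn]; rfl
  subst hL
  have hk : b - 1 < (List.ofFn c).length := by rw [List.length_ofFn]; omega
  have hbefore : ((List.ofFn c).take (b - 1)).sum < i := by
    rw [sum_take_ofFn c (by omega)]; exact hleast (b - 1) (by omega)
  have hupto :
      ((List.ofFn c).take (b - 1)).sum + (List.ofFn c)[b - 1] = ((List.ofFn c).take b).sum := by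
    rw [← List.sum_take_succ _ _ hk, Nat.sub_add_cancel hb]
  rw [sum_take_ofFn c hbm] at hupto
  obtain ⟨hp, hget, hfalse, htrue⟩ :=
    unaryCode_select_false (p := (i - 1) + (b - 1)) hk (by omega) (by omega)
  exact ⟨hp, hget, by rw [hfalse, Nat.add_sub_cancel], htrue⟩
end
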